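/- Under the hypotheses of the unboundedness lemma and the conservation corollary, for any true Π¹₁ sentence φ: ACA₀ + φ does not prove RFN_{Π¹₁}(ACA₀ + φ) even in the presence of a Σ¹₁ oracle, i.e., there is no true Σ¹₁ sentence σ with ACA₀ + φ + σ ⊢ RFN_{Π¹₁}(ACA₀ + φ). -/
import Mathlib


/-- for any true Π¹₁ sentence φ, ACA₀ + φ does not prove
    RFN_{Π¹₁}(ACA₀ + φ) even with a Σ¹₁ oracle. -/
theorem no_oracle_self_reflection
    {S : Type*} (Prov : Set S → S → Prop) (imp : S → S → S)
    (Sig Pi : Set S) (Tr : S → Prop)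
    (Def Sound : Set S → Prop)
    (rfn : Set S → S)
    (ACA SAC : Set S)                      -- ACA₀ and Σ¹₁-AC₀
    (hB : ACA ⊆ SAC)
    (provMono : ∀ (T U : Set S) (θ : S), T ⊆ U → Prov T θ → Prov U θ)
    (mp : ∀ (T : Set S) (a b : S), Prov T (imp a b) → Prov T a → Prov T b)
    -- (a) the conservation corollary, as an implication provable from ACA₀:
    (conservRefl : ∀ φ ∈ Pi,
      Prov ACA (imp (rfn (ACA ∪ {φ})) (rfn (SAC ∪ {φ}))))
    -- (c) the unboundedness lemma:
    (unbounded : ∀ T : Set S, Def T → Sound T → SAC ⊆ T →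
      ∀ σ, σ ∈ Sig → Tr σ → ¬ Prov (T ∪ {σ}) (rfn T))
    -- extensions of Σ¹₁-AC₀ by a true Π¹₁ sentence are Σ¹₁-definable and Π¹₁-sound:
    (hDef : ∀ φ ∈ Pi, Tr φ → Def (SAC ∪ {φ}))
    (hSound : ∀ φ ∈ Pi, Tr φ → Sound (SAC ∪ {φ}))
    (φ : S) (hφPi : φ ∈ Pi) (hφTr : Tr φ) :
    ¬ ∃ σ, σ ∈ Sig ∧ Tr σ ∧ Prov ((ACA ∪ {φ}) ∪ {σ}) (rfn (ACA ∪ {φ})) := by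
  rintro ⟨σ, hσSig, hσTr, hProv⟩
  have hsub : (ACA ∪ {φ}) ∪ {σ} ⊆ (SAC ∪ {φ}) ∪ {σ} :=
    Set.union_subset_union_left _ (Set.union_subset_union_left _ hB)
  have h1 : Prov ((SAC ∪ {φ}) ∪ {σ}) (rfn (ACA ∪ {φ})) :=
    provMono _ _ _ hsub hProv
  have h2 : Prov ((SAC ∪ {φ}) ∪ {σ}) (imp (rfn (ACA ∪ {φ})) (rfn (SAC ∪ {φ}))) :=
    provMono _ _ _ (Set.Subset.trans (Set.Subset.trans hB Set.subset_union_left)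
      Set.subset_union_left) (conservRefl φ hφPi)
  have h3 : Prov ((SAC ∪ {φ}) ∪ {σ}) (rfn (SAC ∪ {φ})) := mp _ _ _ h2 h1
  exact unbounded (SAC ∪ {φ}) (hDef φ hφPi hφTr) (hSound φ hφPi hφTr)
    Set.subset_union_left σ hσSig hσTr h3
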